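/- arXiv:1902.10708 — 2 statements merged into one kernel-verified Lean document; each statement's English description precedes it below -/
import Mathlib

section
/- In Newton's model, for every n ≥ 0, every k ≥ 1 and every measurable A ⊆ Θ, P(θ_{n+k} ∈ A | X_{1:n}) = E(G(A) | X_{1:n}) P-almost surely, where G is the P-a.s. weak limit of the martingale (G_n). -/
open MeasureTheory ProbabilityTheory Filter Set
open scoped ENNReal NNReal Topology

noncomputable section

/-- Newton's model: `X n` are the observables (indexed from 1; index 0 unused),
`th n` the latent parameters, `f x t` the kernel density of `x` given `t` w.r.t. `μ`,
`G0` the initial guess, `α` the weight sequence, `F` the natural filtration of `X`,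
and `G n` Newton's recursively defined random (predictive) probability measures. -/
structure NewtonModel (Ω : Type*) [mΩ : MeasurableSpace Ω]
    (𝕏 : Type*) [m𝕏 : MeasurableSpace 𝕏]
    (Θ : Type*) [mΘ : MeasurableSpace Θ] where
  P : Measure Ω
  probP : IsProbabilityMeasure P
  X : ℕ → Ω → 𝕏
  meas_X : ∀ n, Measurable (X n)
  th : ℕ → Ω → Θ
  meas_th : ∀ n, Measurable (th n)
  f : 𝕏 → Θ → ℝ≥0∞
  meas_f : Measurable (Function.uncurry f)
  μ : Measure 𝕏
  sfin : SigmaFinite μ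
  f_dens : ∀ t, ∫⁻ x, f x t ∂μ = 1
  G0 : Measure Θ
  probG0 : IsProbabilityMeasure G0
  α : ℕ → ℝ
  α_mem : ∀ n, α n ∈ Set.Ioo (0 : ℝ) 1
  /-- the natural filtration of `X` : `F n = σ(X 1, …, X n)` -/
  F : ℕ → MeasurableSpace Ω
  F_def : ∀ n, F n = ⨆ i ∈ Set.Icc 1 n, MeasurableSpace.comap (X i) m𝕏
  /-- Newton's sequence of random measures -/
  G : ℕ → Ω → Measure Θ
  G_zero : ∀ ω, G 0 ω = G0
  G_rec : ∀ n ω, G (n + 1) ω =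
      ENNReal.ofReal (1 - α (n + 1)) • G n ω +
      ENNReal.ofReal (α (n + 1)) •
        ((∫⁻ t, f (X (n + 1) ω) t ∂(G n ω))⁻¹ • (G n ω).withDensity (f (X (n + 1) ω)))
  meas_G : ∀ n, ∀ A : Set Θ, MeasurableSet A → Measurable fun ω => G n ω A
  /-- `θ₁ ∼ G₀` -/
  th_one : Measure.map (th 1) P = G0
  /-- the conditional distribution of `θ_{n+1}` given `X_{1:n}` is `G n` -/
  cond_th : ∀ (n : ℕ) (A : Set Θ), MeasurableSet A →
      (fun ω => (G n ω A).toReal)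
        =ᵐ[P] P[fun ω => A.indicator (fun _ => (1 : ℝ)) (th (n + 1) ω) | F n]
  /-- the conditional distribution of `X_{n+1}` given `(θ_k)_k` and `X_{1:n}` has
  density `f (· | θ_{n+1})` with respect to `μ` -/
  cond_X : ∀ (n : ℕ) (B : Set 𝕏), MeasurableSet B →
      (fun ω => (∫⁻ x in B, f x (th (n + 1) ω) ∂μ).toReal)
        =ᵐ[P] P[fun ω => B.indicator (fun _ => (1 : ℝ)) (X (n + 1) ω) |
            (⨆ k, MeasurableSpace.comap (th k) mΘ) ⊔ F n]

/-- weak convergence of a sequence of measures -/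
def WeakLim {Θ : Type*} [MeasurableSpace Θ] [TopologicalSpace Θ]
    (Gs : ℕ → Measure Θ) (H : Measure Θ) : Prop :=
  ∀ g : BoundedContinuousFunction Θ ℝ,
    Tendsto (fun n => ∫ t, g t ∂(Gs n)) atTop (𝓝 (∫ t, g t ∂H))

open scoped BoundedContinuousFunction

/-!
Given `X_{1:m}`, the parameter `θ_{m+1}` has conditional law `G_m`, and given all parameters and
`X_{1:m}` the observation `X_{m+1}` has density `f(·|θ_{m+1})`. Integrating out first `X_{m+1}`
and then `θ_{m+1}` shows that the Bayes posterior of `G_m` after observing `X_{m+1}` has, over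
every event of `F_m`, the same average as `G_m`: averaging a posterior over the marginal law of
the observation returns the prior. Newton's update is a convex combination of `G_m` and this
posterior, so the averaged measures `S ↦ E[G_m(·); S]`, `S ∈ F_n`, do not depend on `m ≥ n`.
Testing against bounded continuous functions and using dominated convergence, the same holds for
the weak limit `G`, because such functions determine finite measures on a metrizable space. Hence
`P(θ_{n+k} ∈ A, S) = E[G_{n+k-1}(A); S] = E[G_n(A); S] = E[G(A); S]` for all `S ∈ F_n`.
-/

section CondDistrib

variable {Ω E : Type*} {m0 m : MeasurableSpace Ω} [mE : MeasurableSpace E]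

def IsCondDistrib (Y : Ω → E) (κ : Kernel[m] Ω E) (P : Measure[m0] Ω) : Prop :=
  ∀ ⦃B : Set E⦄, MeasurableSet B → ∀ ⦃S : Set Ω⦄, MeasurableSet[m] S →
    P (S ∩ Y ⁻¹' B) = ∫⁻ ω in S, κ ω B ∂P

variable {Y : Ω → E} {κ : Kernel[m] Ω E} {P : Measure[m0] Ω}

lemma IsCondDistrib.restrict (h : IsCondDistrib Y κ P) (hm : m ≤ m0) {S : Set Ω}
    (hS : MeasurableSet[m] S) : IsCondDistrib Y κ (P.restrict S) := by
  intro B hB S' hS'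
  rw [Measure.restrict_apply' (hm S hS), Measure.restrict_restrict (hm S' hS'),
    Set.inter_right_comm, h hB (hS'.inter hS)]

theorem IsCondDistrib.lintegral_comp [IsFiniteMeasure P] [IsSFiniteKernel κ] (hm : m ≤ m0)
    (hY : Measurable[m0] Y) (h : IsCondDistrib Y κ P) {Ψ : Ω → E → ℝ≥0∞}
    (hΨ : Measurable (Function.uncurry Ψ)) :
    ∫⁻ ω, Ψ ω (Y ω) ∂P = ∫⁻ ω, ∫⁻ e, Ψ ω e ∂κ ω ∂P := by
  have hgraph : Measurable[m0, m.prod mE] fun ω => (ω, Y ω) := (measurable_id'' hm).prodMk hY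
  let law : Measure[m.prod mE] (Ω × E) := @Measure.map _ _ m0 _ (fun ω => (ω, Y ω)) P
  have : IsFiniteMeasure law := Measure.isFiniteMeasure_map _ _
  have hlaw_rect : ∀ S B, MeasurableSet[m] S → MeasurableSet B →
      law (S ×ˢ B) = ((P.trim hm) ⊗ₘ κ) (S ×ˢ B) := by
    intro S B hS hB
    rw [Measure.map_apply hgraph (hS.prod hB), Measure.compProd_apply_prod hS hB,
      ← lintegral_indicator hS, lintegral_trim hm ((κ.measurable_coe hB).indicator hS),
      lintegral_indicator (hm S hS), ← h hB hS]
    rfl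
  have hlaw : law = (P.trim hm) ⊗ₘ κ := by
    refine ext_of_generate_finite _ generateFrom_prod.symm isPiSystem_prod ?_ ?_
    · rintro _ ⟨S, hS, B, hB, rfl⟩
      exact hlaw_rect S B hS hB
    · simpa only [univ_prod_univ] using hlaw_rect univ univ MeasurableSet.univ MeasurableSet.univ
  calc ∫⁻ ω, Ψ ω (Y ω) ∂P
      = ∫⁻ p, Function.uncurry Ψ p ∂law := (@lintegral_map _ _ m0 _ P _ _ hΨ hgraph).symm
    _ = ∫⁻ ω, ∫⁻ e, Ψ ω e ∂κ ω ∂(P.trim hm) := by rw [hlaw, Measure.lintegral_compProd hΨ]; rfl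
    _ = ∫⁻ ω, ∫⁻ e, Ψ ω e ∂κ ω ∂P := lintegral_trim hm hΨ.lintegral_kernel_prod_right

lemma setIntegral_indicator_one_comp (hY : Measurable[m0] Y) {B : Set E} (hB : MeasurableSet B)
    (S : Set Ω) :
    ∫ ω in S, B.indicator (fun _ => (1 : ℝ)) (Y ω) ∂P = P.real (S ∩ Y ⁻¹' B) := by
  change ∫ ω in S, (Y ⁻¹' B).indicator 1 ω ∂P = _
  rw [integral_indicator_one (hY hB), measureReal_restrict_apply (hY hB), Set.inter_comm]

lemma integrable_indicator_one_comp [IsFiniteMeasure P] (hY : Measurable[m0] Y) {B : Set E}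
    (hB : MeasurableSet B) : Integrable (fun ω => B.indicator (fun _ => (1 : ℝ)) (Y ω)) P :=
  (integrable_const 1).indicator (hY hB)

lemma setIntegral_toReal_eq {v : Ω → ℝ≥0∞} (hv : AEMeasurable v P) (hv_fin : ∫⁻ ω, v ω ∂P ≠ ∞)
    (S : Set Ω) : ∫ ω in S, (v ω).toReal ∂P = (∫⁻ ω in S, v ω ∂P).toReal :=
  integral_toReal hv.restrict
    (ae_lt_top' hv.restrict (ne_top_of_le_ne_top hv_fin (setLIntegral_le_lintegral S v)))

lemma isCondDistrib_of_ae_eq_condExp [IsFiniteMeasure P] [IsFiniteKernel κ] (hm : m ≤ m0)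
    (hY : Measurable[m0] Y)
    (h : ∀ B, MeasurableSet B →
      (fun ω => (κ ω B).toReal) =ᵐ[P] P[fun ω => B.indicator (fun _ => (1 : ℝ)) (Y ω) | m]) :
    IsCondDistrib Y κ P := by
  intro B hB S hS
  have hκB : Measurable[m0] fun ω => κ ω B := (κ.measurable_coe hB).mono hm le_rfl
  have hκB_fin : ∫⁻ ω, κ ω B ∂P ≠ ∞ :=
    ne_top_of_le_ne_top
      (by rw [lintegral_const]; exact ENNReal.mul_ne_top κ.bound_ne_top (measure_ne_top P _))
      (lintegral_mono fun ω => κ.measure_le_bound ω B)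
  have hreal : (∫⁻ ω in S, κ ω B ∂P).toReal = P.real (S ∩ Y ⁻¹' B) := by
    rw [← setIntegral_toReal_eq hκB.aemeasurable hκB_fin, ← setIntegral_indicator_one_comp hY hB,
      ← setIntegral_condExp hm (integrable_indicator_one_comp hY hB) hS]
    exact integral_congr_ae (ae_restrict_of_ae (h B hB))
  rw [measureReal_def] at hreal
  exact ((ENNReal.toReal_eq_toReal_iff' (measure_ne_top P _)
    (ne_top_of_le_ne_top hκB_fin (setLIntegral_le_lintegral S _))).mp hreal.symm)

lemma condExp_indicator_comp_ae_eq_condExp_toReal [IsFiniteMeasure P] (hm : m ≤ m0)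
    (hY : Measurable[m0] Y) {B : Set E} (hB : MeasurableSet B) {v : Ω → ℝ≥0∞}
    (hv : AEMeasurable v P) (hv_fin : ∫⁻ ω, v ω ∂P ≠ ∞)
    (h : ∀ S, MeasurableSet[m] S → P (S ∩ Y ⁻¹' B) = ∫⁻ ω in S, v ω ∂P) :
    P[fun ω => B.indicator (fun _ => (1 : ℝ)) (Y ω) | m] =ᵐ[P] P[fun ω => (v ω).toReal | m] := by
  refine ae_eq_condExp_of_forall_setIntegral_eq hm (integrable_toReal_of_lintegral_ne_top hv hv_fin)
    (fun S _ _ => integrable_condExp.integrableOn) (fun S hS _ => ?_)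
    stronglyMeasurable_condExp.aestronglyMeasurable
  rw [setIntegral_condExp hm (integrable_indicator_one_comp hY hB) hS,
    setIntegral_indicator_one_comp hY hB, setIntegral_toReal_eq hv hv_fin,
    measureReal_def, h S hS]

end CondDistrib

section Posterior

variable {𝕏 Θ : Type*} [MeasurableSpace Θ]

/-- The Bayes posterior of the prior `ν` after observing `x`, where `f x t` is the likelihood of
`x` under `t`; it is the zero measure when the marginal density `∫⁻ t, f x t ∂ν` is `0` or `∞`. -/
def posteriorOfDensity (ν : Measure Θ) (f : 𝕏 → Θ → ℝ≥0∞) (x : 𝕏) : Measure Θ :=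
  (∫⁻ t, f x t ∂ν)⁻¹ • ν.withDensity (f x)

lemma posteriorOfDensity_apply (ν : Measure Θ) (f : 𝕏 → Θ → ℝ≥0∞) (x : 𝕏) {A : Set Θ}
    (hA : MeasurableSet A) :
    posteriorOfDensity ν f x A = (∫⁻ t, f x t ∂ν)⁻¹ * ∫⁻ t in A, f x t ∂ν := by
  rw [posteriorOfDensity, Measure.smul_apply, withDensity_apply _ hA, smul_eq_mul]

lemma posteriorOfDensity_apply_univ_le_one (ν : Measure Θ) (f : 𝕏 → Θ → ℝ≥0∞) (x : 𝕏) :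
    posteriorOfDensity ν f x univ ≤ 1 := by
  rw [posteriorOfDensity_apply _ _ _ MeasurableSet.univ, Measure.restrict_univ]
  exact ENNReal.inv_mul_le_one _

theorem Measurable.posteriorOfDensity [MeasurableSpace 𝕏] {α : Type*} {mα : MeasurableSpace α}
    {κ : Kernel α Θ} [IsSFiniteKernel κ]
    {f : 𝕏 → Θ → ℝ≥0∞} (hf : Measurable (Function.uncurry f)) {Y : α → 𝕏} (hY : Measurable Y) :
    Measurable fun a => posteriorOfDensity (κ a) f (Y a) := by
  have hfY : Measurable (Function.uncurry fun a t => f (Y a) t) :=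
    hf.comp ((hY.comp measurable_fst).prodMk measurable_snd)
  refine Measure.measurable_of_measurable_coe _ fun A hA => ?_
  simp only [posteriorOfDensity_apply _ _ _ hA]
  exact hfY.lintegral_kernel_prod_right.inv.mul (hfY.setLIntegral_kernel_prod_right hA)

/-- Averaging the posterior over the marginal law of the observation returns the prior. -/
theorem lintegral_lintegral_posteriorOfDensity_apply [MeasurableSpace 𝕏] {μ : Measure 𝕏}
    [SFinite μ] (ν : Measure Θ) [IsFiniteMeasure ν] {f : 𝕏 → Θ → ℝ≥0∞}
    (hf : Measurable (Function.uncurry f)) (hf_one : ∀ t, ∫⁻ x, f x t ∂μ = 1) {A : Set Θ}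
    (hA : MeasurableSet A) :
    ∫⁻ t, ∫⁻ x, posteriorOfDensity ν f x A ∂μ.withDensity (fun x => f x t) ∂ν = ν A := by
  set q : 𝕏 → ℝ≥0∞ := fun x => ∫⁻ t, f x t ∂ν
  set r : 𝕏 → ℝ≥0∞ := fun x => ∫⁻ t in A, f x t ∂ν
  have hpost_meas : Measurable fun x => posteriorOfDensity ν f x A :=
    (Measure.measurable_coe hA).comp
      (Measurable.posteriorOfDensity (κ := Kernel.const 𝕏 ν) hf measurable_id)
  have hq_int : ∫⁻ x, q x ∂μ = ν univ := by
    rw [lintegral_lintegral_swap hf.aemeasurable]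
    simp [hf_one]
  have hq_fin : ∀ᵐ x ∂μ, q x ≠ ∞ :=
    (ae_lt_top hf.lintegral_prod_right' (hq_int ▸ measure_ne_top ν univ)).mono fun _ => ne_of_lt
  -- `r ≤ q`, so the junk value of the posterior at `q x = 0` does not matter
  have hpost : ∀ᵐ x ∂μ, q x * posteriorOfDensity ν f x A = r x := by
    filter_upwards [hq_fin] with x hx
    rw [posteriorOfDensity_apply _ _ _ hA]
    rcases eq_or_ne (q x) 0 with h0 | h0
    · have : r x = 0 := le_antisymm (h0 ▸ setLIntegral_le_lintegral A _) zero_le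
      rw [this, h0, zero_mul]
    · rw [← mul_assoc, ENNReal.mul_inv_cancel h0 hx, one_mul]
  calc ∫⁻ t, ∫⁻ x, posteriorOfDensity ν f x A ∂μ.withDensity (fun x => f x t) ∂ν
      = ∫⁻ t, ∫⁻ x, f x t * posteriorOfDensity ν f x A ∂μ ∂ν :=
        lintegral_congr fun t => lintegral_withDensity_eq_lintegral_mul _
          (hf.comp (measurable_id.prodMk measurable_const)) hpost_meas
    _ = ∫⁻ x, ∫⁻ t, f x t * posteriorOfDensity ν f x A ∂ν ∂μ :=
        lintegral_lintegral_swap ((hf.comp measurable_swap).mul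
          (hpost_meas.comp measurable_snd)).aemeasurable
    _ = ∫⁻ x, q x * posteriorOfDensity ν f x A ∂μ :=
        lintegral_congr fun x =>
          lintegral_mul_const _ (hf.comp (measurable_const.prodMk measurable_id))
    _ = ∫⁻ x, r x ∂μ := lintegral_congr_ae hpost
    _ = ∫⁻ t in A, ∫⁻ x, f x t ∂μ ∂ν := lintegral_lintegral_swap hf.aemeasurable
    _ = ν A := by simp [hf_one]

end Posterior

section WeakLimit

variable {Ω Θ : Type*} [MeasurableSpace Ω] [MeasurableSpace Θ] [TopologicalSpace Θ]

lemma WeakLim.tendsto_lintegral [OpensMeasurableSpace Θ] {Gs : ℕ → Measure Θ} {H : Measure Θ}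
    [∀ n, IsFiniteMeasure (Gs n)] [IsFiniteMeasure H] (h : WeakLim Gs H) (g : Θ →ᵇ ℝ≥0) :
    Tendsto (fun n => ∫⁻ t, g t ∂Gs n) atTop (𝓝 (∫⁻ t, g t ∂H)) :=
  FiniteMeasure.tendsto_iff_forall_lintegral_tendsto (μs := fun n => ⟨Gs n, inferInstance⟩)
    (μ := ⟨H, inferInstance⟩) |>.mp (FiniteMeasure.tendsto_iff_forall_integral_tendsto.mpr h) g

theorem tendsto_lintegral_bind_of_ae_weakLim [OpensMeasurableSpace Θ] {P : Measure Ω}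
    [IsFiniteMeasure P] {κs : ℕ → Ω → Measure Θ} {κ : Ω → Measure Θ}
    (hκs : ∀ n, Measurable (κs n)) (hκ : Measurable κ) {C : ℝ≥0∞} (hC : C ≠ ∞)
    (hκs_le : ∀ n ω, κs n ω univ ≤ C) [∀ ω, IsFiniteMeasure (κ ω)]
    (hlim : ∀ᵐ ω ∂P, WeakLim (fun n => κs n ω) (κ ω)) (g : Θ →ᵇ ℝ≥0) :
    Tendsto (fun n => ∫⁻ t, g t ∂P.bind (κs n)) atTop (𝓝 (∫⁻ t, g t ∂P.bind κ)) := by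
  have hg : Measurable fun t => (g t : ℝ≥0∞) := g.measurable_coe_ennreal_comp
  have hκs_fin : ∀ n ω, IsFiniteMeasure (κs n ω) := fun n ω =>
    ⟨(hκs_le n ω).trans_lt hC.lt_top⟩
  simp only [Measure.lintegral_bind (hκs _).aemeasurable hg.aemeasurable,
    Measure.lintegral_bind hκ.aemeasurable hg.aemeasurable]
  refine tendsto_lintegral_of_dominated_convergence (fun _ => nndist 0 g * C)
    (fun n => (Measure.measurable_lintegral hg).comp (hκs n)) (fun n => ?_)
    (by simp [lintegral_const, ENNReal.mul_ne_top, hC])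
    (hlim.mono fun ω hω => hω.tendsto_lintegral g)
  refine Eventually.of_forall fun ω => ?_
  calc ∫⁻ t, g t ∂κs n ω ≤ ∫⁻ _, (nndist 0 g : ℝ≥0∞) ∂κs n ω :=
        lintegral_mono fun t => ENNReal.coe_le_coe.mpr (g.apply_le_nndist_zero t)
    _ ≤ nndist 0 g * C := by rw [lintegral_const]; gcongr; exact hκs_le n ω

theorem bind_eq_of_ae_weakLim [HasOuterApproxClosed Θ] [BorelSpace Θ] {P : Measure Ω}
    [IsFiniteMeasure P] {κs : ℕ → Ω → Measure Θ} {κ : Ω → Measure Θ}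
    (hκs : ∀ n, Measurable (κs n)) (hκ : Measurable κ) {C : ℝ≥0∞} (hC : C ≠ ∞)
    (hκs_le : ∀ n ω, κs n ω univ ≤ C) [∀ ω, IsProbabilityMeasure (κ ω)]
    (hlim : ∀ᵐ ω ∂P, WeakLim (fun n => κs n ω) (κ ω)) {ρ : Measure Θ}
    (hconst : ∀ᶠ n in atTop, P.bind (κs n) = ρ) : P.bind κ = ρ := by
  have : IsFiniteMeasure (P.bind κ) :=
    ⟨by simp [Measure.bind_apply MeasurableSet.univ hκ.aemeasurable]⟩
  refine ext_of_forall_lintegral_eq_of_IsFiniteMeasure fun g => tendsto_nhds_unique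
    (tendsto_lintegral_bind_of_ae_weakLim hκs hκ hC hκs_le hlim g) ?_
  exact tendsto_const_nhds.congr' (hconst.mono fun n hn => by simp only [hn])

end WeakLimit

namespace NewtonModel

variable {Ω 𝕏 Θ : Type*} [mΩ : MeasurableSpace Ω] [m𝕏 : MeasurableSpace 𝕏]
  [mΘ : MeasurableSpace Θ] (M : NewtonModel Ω 𝕏 Θ)

lemma F_le (n : ℕ) : M.F n ≤ mΩ := by
  rw [M.F_def]
  exact iSup₂_le fun i _ => (M.meas_X i).comap_le

lemma F_mono {n m : ℕ} (h : n ≤ m) : M.F n ≤ M.F m := by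
  rw [M.F_def, M.F_def]
  exact biSup_mono fun i hi => ⟨hi.1, hi.2.trans h⟩

lemma measurable_X_F {i n : ℕ} (h1 : 1 ≤ i) (h2 : i ≤ n) : Measurable[M.F n] (M.X i) := by
  refine Measurable.of_comap_le ?_
  rw [M.F_def]
  exact le_iSup₂ (f := fun i (_ : i ∈ Icc 1 n) => MeasurableSpace.comap (M.X i) m𝕏) i ⟨h1, h2⟩

abbrev jointSigma (n : ℕ) : MeasurableSpace Ω :=
  (⨆ k, MeasurableSpace.comap (M.th k) mΘ) ⊔ M.F n

lemma jointSigma_le (n : ℕ) : M.jointSigma n ≤ mΩ :=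
  sup_le (iSup_le fun k => (M.meas_th k).comap_le) (M.F_le n)

lemma F_le_jointSigma (n : ℕ) : M.F n ≤ M.jointSigma n := le_sup_right

lemma measurable_th_jointSigma (k n : ℕ) : Measurable[M.jointSigma n] (M.th k) :=
  Measurable.of_comap_le <|
    (le_iSup (fun k => MeasurableSpace.comap (M.th k) mΘ) k).trans le_sup_left

lemma ofReal_one_sub_α_add_ofReal_α (n : ℕ) :
    ENNReal.ofReal (1 - M.α n) + ENNReal.ofReal (M.α n) = 1 := by
  rw [← ENNReal.ofReal_add (by linarith [(M.α_mem n).2]) (M.α_mem n).1.le]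
  norm_num

lemma G_succ (n : ℕ) (ω : Ω) : M.G (n + 1) ω =
    ENNReal.ofReal (1 - M.α (n + 1)) • M.G n ω +
      ENNReal.ofReal (M.α (n + 1)) • posteriorOfDensity (M.G n ω) M.f (M.X (n + 1) ω) :=
  M.G_rec n ω

lemma G_apply_univ_le_one (n : ℕ) (ω : Ω) : M.G n ω univ ≤ 1 := by
  induction n with
  | zero => simp [M.G_zero, M.probG0.measure_univ]
  | succ n ih =>
    rw [M.G_succ, Measure.add_apply, Measure.smul_apply, Measure.smul_apply, smul_eq_mul,
      smul_eq_mul, ← M.ofReal_one_sub_α_add_ofReal_α (n + 1)]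
    gcongr
    · exact mul_le_of_le_one_right' ih
    · exact mul_le_of_le_one_right' (posteriorOfDensity_apply_univ_le_one _ _ _)

lemma measurable_G_F (n : ℕ) : Measurable[M.F n] (M.G n) := by
  induction n with
  | zero => simp [funext M.G_zero]
  | succ n ih =>
    let κ : Kernel[M.F (n + 1)] Ω Θ :=
      @Kernel.mk _ _ (M.F (n + 1)) _ (M.G n) (ih.mono (M.F_mono n.le_succ) le_rfl)
    have : IsFiniteKernel κ := ⟨⟨1, ENNReal.one_lt_top, M.G_apply_univ_le_one n⟩⟩
    have hpost : Measurable[M.F (n + 1)] fun ω => posteriorOfDensity (κ ω) M.f (M.X (n + 1) ω) :=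
      Measurable.posteriorOfDensity M.meas_f (M.measurable_X_F (by omega) le_rfl)
    rw [funext (M.G_succ n)]
    refine Measure.measurable_of_measurable_coe _ fun A hA => ?_
    simp only [Measure.add_apply, Measure.smul_apply, smul_eq_mul]
    exact ((κ.measurable_coe hA).const_mul _).add
      (((Measure.measurable_coe hA).comp hpost).const_mul _)

lemma measurable_G (n : ℕ) : Measurable (M.G n) := (M.measurable_G_F n).mono (M.F_le n) le_rfl

def kernelG (n : ℕ) : Kernel[M.F n] Ω Θ := @Kernel.mk _ _ (M.F n) _ (M.G n) (M.measurable_G_F n)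

instance (n : ℕ) : IsFiniteKernel (M.kernelG n) :=
  ⟨⟨1, ENNReal.one_lt_top, M.G_apply_univ_le_one n⟩⟩

def likelihood : Kernel Θ 𝕏 where
  toFun t := M.μ.withDensity fun x => M.f x t
  measurable' := by
    have := M.sfin
    refine Measure.measurable_of_measurable_coe _ fun B hB => ?_
    simp only [withDensity_apply _ hB]
    exact (M.meas_f.comp measurable_swap).lintegral_prod_right'

lemma likelihood_apply (t : Θ) : M.likelihood t = M.μ.withDensity fun x => M.f x t := rfl

instance : IsMarkovKernel M.likelihood :=
  ⟨fun t => ⟨by simp [likelihood_apply, M.f_dens]⟩⟩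

lemma isCondDistrib_th (n : ℕ) : IsCondDistrib (M.th (n + 1)) (M.kernelG n) M.P :=
  have := M.probP
  isCondDistrib_of_ae_eq_condExp (M.F_le n) (M.meas_th _) (M.cond_th n)

lemma isCondDistrib_X (n : ℕ) :
    IsCondDistrib (M.X (n + 1))
      (M.likelihood.comap (M.th (n + 1)) (M.measurable_th_jointSigma (n + 1) n)) M.P := by
  have := M.probP
  refine isCondDistrib_of_ae_eq_condExp (M.jointSigma_le n) (M.meas_X _) fun B hB => ?_
  simpa only [Kernel.comap_apply, likelihood_apply, withDensity_apply _ hB] using M.cond_X n B hB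

theorem setLIntegral_comp_X_succ {n : ℕ} {S : Set Ω} (hS : MeasurableSet[M.F n] S)
    {Ψ : Ω → 𝕏 → ℝ≥0∞} (hΨ : Measurable[(M.F n).prod m𝕏] (Function.uncurry Ψ)) :
    ∫⁻ ω in S, Ψ ω (M.X (n + 1) ω) ∂M.P =
      ∫⁻ ω in S, ∫⁻ t, ∫⁻ x, Ψ ω x ∂M.likelihood t ∂M.G n ω ∂M.P := by
  have := M.probP
  have hΨ_joint : Measurable[(M.F n).prod mΘ]
      (Function.uncurry fun ω t => ∫⁻ x, Ψ ω x ∂M.likelihood t) :=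
    Measurable.lintegral_kernel_prod_right' (f := fun q : (Ω × Θ) × 𝕏 => Ψ q.1.1 q.2)
      (κ := @Kernel.prodMkLeft _ _ _ _ Ω (M.F n) M.likelihood)
      (hΨ.comp ((measurable_fst.comp measurable_fst).prodMk measurable_snd))
  calc ∫⁻ ω in S, Ψ ω (M.X (n + 1) ω) ∂M.P
      = ∫⁻ ω in S, ∫⁻ x, Ψ ω x ∂M.likelihood (M.th (n + 1) ω) ∂M.P :=
        ((M.isCondDistrib_X n).restrict (M.jointSigma_le n)
          (M.F_le_jointSigma n S hS)).lintegral_comp (M.jointSigma_le n) (M.meas_X _)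
          (hΨ.mono (sup_le_sup (MeasurableSpace.comap_mono (M.F_le_jointSigma n)) le_rfl) le_rfl)
    _ = ∫⁻ ω in S, ∫⁻ t, ∫⁻ x, Ψ ω x ∂M.likelihood t ∂M.G n ω ∂M.P :=
        ((M.isCondDistrib_th n).restrict (M.F_le n) hS).lintegral_comp (M.F_le n) (M.meas_th _)
          hΨ_joint

theorem setLIntegral_posteriorOfDensity_apply {n : ℕ} {S : Set Ω} (hS : MeasurableSet[M.F n] S)
    {A : Set Θ} (hA : MeasurableSet A) :
    ∫⁻ ω in S, posteriorOfDensity (M.G n ω) M.f (M.X (n + 1) ω) A ∂M.P =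
      ∫⁻ ω in S, M.G n ω A ∂M.P := by
  have := M.sfin
  rw [M.setLIntegral_comp_X_succ hS (Ψ := fun ω x => posteriorOfDensity (M.G n ω) M.f x A)
    ((Measure.measurable_coe hA).comp <| Measurable.posteriorOfDensity
      (κ := Kernel.prodMkRight 𝕏 (M.kernelG n)) M.meas_f measurable_snd)]
  refine lintegral_congr fun ω => ?_
  have : IsFiniteMeasure (M.G n ω) := inferInstanceAs (IsFiniteMeasure (M.kernelG n ω))
  exact lintegral_lintegral_posteriorOfDensity_apply (M.G n ω) M.meas_f M.f_dens hA

theorem bind_restrict_G_succ {n : ℕ} {S : Set Ω} (hS : MeasurableSet[M.F n] S) :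
    (M.P.restrict S).bind (M.G (n + 1)) = (M.P.restrict S).bind (M.G n) := by
  ext A hA
  rw [Measure.bind_apply hA (M.measurable_G _).aemeasurable,
    Measure.bind_apply hA (M.measurable_G _).aemeasurable]
  have hGA : Measurable fun ω => M.G n ω A := (Measure.measurable_coe hA).comp (M.measurable_G n)
  simp only [M.G_succ, Measure.add_apply, Measure.smul_apply, smul_eq_mul]
  rw [lintegral_add_left (hGA.const_mul _),
    lintegral_const_mul' _ _ ENNReal.ofReal_ne_top, lintegral_const_mul' _ _ ENNReal.ofReal_ne_top,
    M.setLIntegral_posteriorOfDensity_apply hS hA, ← add_mul, M.ofReal_one_sub_α_add_ofReal_α,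
    one_mul]

theorem bind_restrict_G_eq {n m : ℕ} (hnm : n ≤ m) {S : Set Ω} (hS : MeasurableSet[M.F n] S) :
    (M.P.restrict S).bind (M.G m) = (M.P.restrict S).bind (M.G n) := by
  induction m, hnm using Nat.le_induction with
  | base => rfl
  | succ m hnm ih => rw [M.bind_restrict_G_succ (M.F_mono hnm S hS), ih]

theorem bind_restrict_eq_of_weakLim [TopologicalSpace Θ] [HasOuterApproxClosed Θ] [BorelSpace Θ]
    {Glim : Ω → Measure Θ} [∀ ω, IsProbabilityMeasure (Glim ω)] (hGlim : Measurable Glim)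
    (hGlim_conv : ∀ᵐ ω ∂M.P, WeakLim (fun n => M.G n ω) (Glim ω)) {n : ℕ} {S : Set Ω}
    (hS : MeasurableSet[M.F n] S) :
    (M.P.restrict S).bind Glim = (M.P.restrict S).bind (M.G n) :=
  have := M.probP
  bind_eq_of_ae_weakLim M.measurable_G hGlim ENNReal.one_ne_top M.G_apply_univ_le_one
    (ae_restrict_of_ae hGlim_conv) (eventually_atTop.2 ⟨n, fun _ hm => M.bind_restrict_G_eq hm hS⟩)

end NewtonModel

theorem newton_predictive_eq_condexp_limit_general
    {Ω 𝕏 Θ : Type*} [MeasurableSpace Ω]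
    [MeasurableSpace 𝕏]
    [MeasurableSpace Θ] [TopologicalSpace Θ] [PolishSpace Θ] [BorelSpace Θ]
    (M : NewtonModel Ω 𝕏 Θ)
    (Glim : Ω → Measure Θ)
    (hGlim_prob : ∀ ω, IsProbabilityMeasure (Glim ω))
    (hGlim_meas : ∀ A : Set Θ, MeasurableSet A → Measurable fun ω => Glim ω A)
    (hGlim_conv : ∀ᵐ ω ∂M.P, WeakLim (fun n => M.G n ω) (Glim ω)) :
    ∀ (n k : ℕ), 1 ≤ k → ∀ A : Set Θ, MeasurableSet A →
      M.P[fun ω => A.indicator (fun _ => (1 : ℝ)) (M.th (n + k) ω) | M.F n]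
        =ᵐ[M.P] M.P[fun ω => (Glim ω A).toReal | M.F n] := by
  intro n k hk A hA
  obtain ⟨j, rfl⟩ : ∃ j, k = j + 1 := ⟨k - 1, by omega⟩
  have := M.probP
  have hGlim : Measurable Glim := Measure.measurable_of_measurable_coe _ hGlim_meas
  refine condExp_indicator_comp_ae_eq_condExp_toReal (M.F_le n) (M.meas_th _) hA
    (hGlim_meas A hA).aemeasurable
    (ne_top_of_le_ne_top (by simp) (lintegral_mono fun ω => prob_le_one)) fun S hS => ?_
  calc M.P (S ∩ M.th (n + j + 1) ⁻¹' A)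
      = ∫⁻ ω in S, M.G (n + j) ω A ∂M.P :=
        M.isCondDistrib_th (n + j) hA (M.F_mono (Nat.le_add_right n j) S hS)
    _ = (M.P.restrict S).bind (M.G n) A := by
        rw [← M.bind_restrict_G_eq (Nat.le_add_right n j) hS,
          Measure.bind_apply hA (M.measurable_G _).aemeasurable]
    _ = ∫⁻ ω in S, Glim ω A ∂M.P := by
        rw [← M.bind_restrict_eq_of_weakLim hGlim hGlim_conv hS,
          Measure.bind_apply hA hGlim.aemeasurable]

/-- In Newton's model, for every `n ≥ 0`, `k ≥ 1` and measurable `A ⊆ Θ`,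
`P(θ_{n+k} ∈ A | X_{1:n}) = E(G(A) | X_{1:n})` `P`-a.s., where `G` is the `P`-a.s. weak
limit of the martingale `(G n)`. -/
theorem newton_predictive_eq_condexp_limit
    {Ω 𝕏 Θ : Type*} [MeasurableSpace Ω]
    [MeasurableSpace 𝕏] [StandardBorelSpace 𝕏]
    [MeasurableSpace Θ] [TopologicalSpace Θ] [PolishSpace Θ] [BorelSpace Θ]
    (M : NewtonModel Ω 𝕏 Θ)
    (Glim : Ω → Measure Θ)
    (hGlim_prob : ∀ ω, IsProbabilityMeasure (Glim ω))
    (hGlim_meas : ∀ A : Set Θ, MeasurableSet A → Measurable fun ω => Glim ω A)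
    (hGlim_conv : ∀ᵐ ω ∂M.P, WeakLim (fun n => M.G n ω) (Glim ω)) :
    ∀ (n k : ℕ), 1 ≤ k → ∀ A : Set Θ, MeasurableSet A →
      M.P[fun ω => A.indicator (fun _ => (1 : ℝ)) (M.th (n + k) ω) | M.F n]
        =ᵐ[M.P] M.P[fun ω => (Glim ω A).toReal | M.F n] :=
  newton_predictive_eq_condexp_limit_general M Glim hGlim_prob hGlim_meas hGlim_conv
end
end

section
/- Let (α_n) ⊆ (0,1) with ∑_n α_n² < ∞, and suppose α_n = (n b_n)^{-1} for a sequence (b_n) of positive numbers that is nonincreasing for all sufficiently large n. Let (r_n) be a monotone positive sequence with r_n ~ (∑_{k>n} α_k²)^{-1}. Then limsup_n r_{n−1} α_n ≤ limsup_n b_n < ∞, and consequently ∑_{k≥1} r_k² α_{k+1}⁴ < ∞. -/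
/-!
For `n` past the point where `b` stops increasing, `α (n + k) ≥ ((n + k) b n)⁻¹`, and comparing
with the telescoping series `∑ₖ ((n + k)(n + k + 1))⁻¹ = n⁻¹` gives `∑_{k ≥ n} α k ^ 2 ≥ (n b n ^ 2)⁻¹`,
that is `α n ≤ b n ∑_{k ≥ n} α k ^ 2`. Multiplying by `r (n - 1)`, whose product with that tail
tends to `1`, yields `r (n - 1) α n ≤ b n (1 + o(1))`. So `r k α (k + 1)` is bounded, and
`r k ^ 2 α (k + 1) ^ 4 = (r k α (k + 1)) ^ 2 α (k + 1) ^ 2` is summable.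
-/

open Filter
open scoped Topology ENNReal

lemma inv_mul_sq_le_tsum_sq {f : ℕ → ℝ} {x c : ℝ} (hx : 0 < x) (hc : 0 < c)
    (hf : Summable fun k => f k ^ 2) (h : ∀ k : ℕ, ((x + k) * c)⁻¹ ≤ f k) :
    (x * c ^ 2)⁻¹ ≤ ∑' k, f k ^ 2 := by
  set g : ℕ → ℝ := fun k => (x + k)⁻¹ / c ^ 2
  have hg : Tendsto g atTop (𝓝 0) := by
    simpa [g] using
      (tendsto_atTop_add_const_left _ x tendsto_natCast_atTop_atTop).inv_tendsto_atTop.div_const _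
  have hterm : ∀ k, g k - g (k + 1) ≤ f k ^ 2 := by
    intro k
    have hxk : 0 < x + k := by positivity
    calc g k - g (k + 1) = ((x + k) * (x + k + 1) * c ^ 2)⁻¹ := by
          simp only [g]; push_cast; field_simp; ring
      _ ≤ (((x + k) * c)⁻¹) ^ 2 := by
          rw [inv_pow, mul_pow]; gcongr; nlinarith
      _ ≤ f k ^ 2 := pow_le_pow_left₀ (by positivity) (h k) 2
  have hpartial : ∀ m, g 0 - g m ≤ ∑' k, f k ^ 2 := fun m => by
    rw [← Finset.sum_range_sub']
    exact (Finset.sum_le_sum fun k _ => hterm k).trans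
      (hf.sum_le_tsum _ fun k _ => sq_nonneg _)
  have := le_of_tendsto' (tendsto_const_nhds.sub hg) hpartial
  rw [mul_inv]
  simpa [g, div_eq_mul_inv] using this

lemma le_mul_tsum_sq_of_eq_inv_mul {α b : ℕ → ℝ} {N n : ℕ} (hb_pos : ∀ n, 0 < b n)
    (hb_anti : AntitoneOn b (Set.Ici N)) (hform : ∀ n : ℕ, 1 ≤ n → α n = ((n : ℝ) * b n)⁻¹)
    (hα_sq : Summable fun n => α n ^ 2) (hNn : N ≤ n) (hn : 1 ≤ n) :
    α n ≤ b n * ∑' k, α (n + k) ^ 2 := by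
  have hn' : (0 : ℝ) < n := by exact_mod_cast hn
  have hlower : ∀ k : ℕ, (((n : ℝ) + k) * b n)⁻¹ ≤ α (n + k) := fun k => by
    rw [hform (n + k) (by omega), Nat.cast_add]
    have := hb_pos (n + k)
    gcongr
    exact hb_anti (Set.mem_Ici.2 hNn) (Set.mem_Ici.2 (by omega)) (by omega)
  have htail := inv_mul_sq_le_tsum_sq hn' (hb_pos n)
    ((summable_nat_add_iff n).2 hα_sq |>.congr fun k => by rw [add_comm]) hlower
  calc α n = b n * (n * b n ^ 2)⁻¹ := by
        rw [hform n hn]; field_simp [(hb_pos n).ne']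
    _ ≤ b n * ∑' k, α (n + k) ^ 2 := mul_le_mul_of_nonneg_left htail (hb_pos n).le

section limsup

variable {ι : Type*} {l : Filter ι}

lemma limsup_ofReal_le_of_le_mul [l.NeBot] {x y c : ι → ℝ}
    (hc : Tendsto c l (𝓝 1)) (h : ∀ᶠ i in l, x i ≤ y i * c i) :
    limsup (fun i => ENNReal.ofReal (x i)) l ≤ limsup (fun i => ENNReal.ofReal (y i)) l := by
  have hc' : limsup (fun i => ENNReal.ofReal (c i)) l = 1 := by
    simpa [Function.comp_def] using ((ENNReal.continuous_ofReal.tendsto 1).comp hc).limsup_eq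
  calc limsup (fun i => ENNReal.ofReal (x i)) l
      ≤ limsup ((fun i => ENNReal.ofReal (y i)) * fun i => ENNReal.ofReal (c i)) l := by
        refine limsup_le_limsup ?_
        filter_upwards [h, hc.eventually (lt_mem_nhds one_pos)] with i hi hci
        rw [Pi.mul_apply, ← ENNReal.ofReal_mul' hci.le]
        exact ENNReal.ofReal_le_ofReal hi
    _ ≤ limsup (fun i => ENNReal.ofReal (y i)) l * limsup (fun i => ENNReal.ofReal (c i)) l :=
        ENNReal.limsup_mul_le' (by simp [hc']) (by simp [hc'])
    _ = limsup (fun i => ENNReal.ofReal (y i)) l := by rw [hc', mul_one]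

lemma limsup_ofReal_lt_top_of_eventually_le {y : ι → ℝ} {C : ℝ} (h : ∀ᶠ i in l, y i ≤ C) :
    limsup (fun i => ENNReal.ofReal (y i)) l < ∞ :=
  (limsup_le_of_le (by isBoundedDefault) (h.mono fun _ hi => ENNReal.ofReal_le_ofReal hi)).trans_lt
    ENNReal.ofReal_lt_top

lemma isBigO_one_of_limsup_ofReal_lt_top {x : ι → ℝ} (hx : ∀ᶠ i in l, 0 ≤ x i)
    (h : limsup (fun i => ENNReal.ofReal (x i)) l < ∞) : x =O[l] fun _ => (1 : ℝ) := by
  obtain ⟨C, hC, hC_top⟩ := exists_between h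
  refine .of_bound C.toReal ?_
  filter_upwards [hx, eventually_lt_of_limsup_lt hC] with i hxi hi
  rw [norm_one, mul_one, Real.norm_of_nonneg hxi]
  exact (ENNReal.ofReal_le_iff_le_toReal hC_top.ne).1 hi.le

end limsup

lemma summable_sq_mul_of_isBigO_one {x a : ℕ → ℝ} (ha : Summable a)
    (hx : x =O[atTop] fun _ => (1 : ℝ)) : Summable fun n => x n ^ 2 * a n :=
  summable_of_isBigO_nat ha <| by simpa using (hx.pow 2).mul (Asymptotics.isBigO_refl a atTop)

theorem newton_rate_condition_sufficient_general
    (α b : ℕ → ℝ)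
    (hb_pos : ∀ n, 0 < b n)
    (hb_mono : ∃ N : ℕ, ∀ m n : ℕ, N ≤ n → n ≤ m → b m ≤ b n)
    (hform : ∀ n : ℕ, 1 ≤ n → α n = ((n : ℝ) * b n)⁻¹)
    (hα_sq : Summable fun n => (α n) ^ 2)
    (r : ℕ → ℝ) (hr_pos : ∀ n, 0 < r n)
    (hr_equiv : Tendsto (fun n => r n * ∑' k, (α (n + 1 + k)) ^ 2) atTop (𝓝 1)) :
    (Filter.limsup (fun n : ℕ => ENNReal.ofReal (r (n - 1) * α n)) atTop
        ≤ Filter.limsup (fun n : ℕ => ENNReal.ofReal (b n)) atTop ∧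
      Filter.limsup (fun n : ℕ => ENNReal.ofReal (b n)) atTop < ∞) ∧
    Summable (fun k => (r k) ^ 2 * (α (k + 1)) ^ 4) := by
  obtain ⟨N, hN⟩ := hb_mono
  have hb_anti : AntitoneOn b (Set.Ici N) := fun m hm n _ hmn => hN n m hm hmn
  have hbound : ∀ᶠ m in atTop,
      r m * α (m + 1) ≤ b (m + 1) * (r m * ∑' k, α (m + 1 + k) ^ 2) := by
    filter_upwards [eventually_ge_atTop N] with m hm
    rw [mul_left_comm]
    exact mul_le_mul_of_nonneg_left
      (le_mul_tsum_sq_of_eq_inv_mul hb_pos hb_anti hform hα_sq (by omega) (by omega)) (hr_pos m).le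
  have hlimsup := limsup_ofReal_le_of_le_mul hr_equiv hbound
  have hb_fin : limsup (fun m => ENNReal.ofReal (b (m + 1))) atTop < ∞ :=
    limsup_ofReal_lt_top_of_eventually_le (C := b N) <| by
      filter_upwards [eventually_ge_atTop N] with m hm using hN _ _ le_rfl (by omega)
  have hα_pos (m : ℕ) : 0 < α (m + 1) := by
    rw [hform (m + 1) (by omega)]; have := hb_pos (m + 1); positivity
  have hshift (f : ℕ → ℝ≥0∞) : limsup f atTop = limsup (fun m => f (m + 1)) atTop :=
    (limsup_nat_add f 1).symm
  refine ⟨?_, ?_⟩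
  · rw [hshift, hshift fun n => ENNReal.ofReal (b n)]
    simpa using And.intro hlimsup hb_fin
  · exact (summable_sq_mul_of_isBigO_one ((summable_nat_add_iff 1).2 hα_sq)
      (isBigO_one_of_limsup_ofReal_lt_top (.of_forall fun m => (mul_pos (hr_pos m) (hα_pos m)).le)
        (hlimsup.trans_lt hb_fin))).congr fun m => by ring

/-- If `αₙ = (n bₙ)⁻¹` with `(bₙ)` positive and eventually nonincreasing, `∑ αₙ² < ∞`, and
`(rₙ)` is a monotone positive sequence with `rₙ ~ (∑_{k>n} αₖ²)⁻¹`, then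
`limsup rₙ₋₁ αₙ ≤ limsup bₙ < ∞` and consequently `∑ rₖ² α_{k+1}⁴ < ∞`. -/
theorem newton_rate_condition_sufficient
    (α b : ℕ → ℝ)
    (hα_mem : ∀ n, α n ∈ Set.Ioo (0 : ℝ) 1)
    (hb_pos : ∀ n, 0 < b n)
    (hb_mono : ∃ N : ℕ, ∀ m n : ℕ, N ≤ n → n ≤ m → b m ≤ b n)
    (hform : ∀ n : ℕ, 1 ≤ n → α n = ((n : ℝ) * b n)⁻¹)
    (hα_sq : Summable fun n => (α n) ^ 2)
    (r : ℕ → ℝ) (hr_pos : ∀ n, 0 < r n) (hr_mono : Monotone r ∨ Antitone r)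
    (hr_equiv : Tendsto (fun n => r n * ∑' k, (α (n + 1 + k)) ^ 2) atTop (𝓝 1)) :
    (Filter.limsup (fun n : ℕ => ENNReal.ofReal (r (n - 1) * α n)) atTop
        ≤ Filter.limsup (fun n : ℕ => ENNReal.ofReal (b n)) atTop ∧
      Filter.limsup (fun n : ℕ => ENNReal.ofReal (b n)) atTop < ∞) ∧
    Summable (fun k => (r k) ^ 2 * (α (k + 1)) ^ 4) :=
  newton_rate_condition_sufficient_general α b hb_pos hb_mono hform hα_sq r hr_pos hr_equiv
end
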